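/- Let S and T be triangulated categories with arbitrary small coproducts, and let F : S → T be a functor admitting a right adjoint G. Assume that G commutes with the shift functors (G(X⟦1⟧) is naturally isomorphic to (G X)⟦1⟧), that G commutes with small coproducts, and that G reflects zero objects (if G X is a zero object then X is a zero object). If U is a compact generator of S, then F(U) is a compact generator of T. -/

import Mathlib

/-!
The adjunction identifies `F.obj U ⟶ X` additively with `U ⟶ G.obj X`. Since `G` carries `∐ X`
to `∐ G.obj (X i)`, the comparison map for `F.obj U` becomes the one for `U` up to these
bijections, so compactness transfers. Maps `F.obj U ⟶ X⟦i⟧` correspond to maps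
`U ⟶ (G.obj X)⟦i⟧`, so if all of them vanish then `G.obj X` is zero, hence so is `X`.
-/

open CategoryTheory CategoryTheory.Limits CategoryTheory.Pretriangulated

universe v u

/-- The canonical map `⨁ᵢ Hom(A, B i) → Hom(A, ∐ B)` in a preadditive category,
sending a finitely supported family `(fᵢ)` to `∑ᵢ fᵢ ≫ ιᵢ`. -/
noncomputable def homCoprodComparison {C : Type u} [Category.{v} C] [Preadditive C]
    {ι : Type v} (A : C) (B : ι → C) [HasCoproduct B] :
    (Π₀ i, (A ⟶ B i)) →+ (A ⟶ ∐ B) :=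
  letI := Classical.decEq ι
  DFinsupp.sumAddHom fun i =>
    { toFun := fun f => f ≫ Sigma.ι B i
      map_zero' := by simp
      map_add' := fun f g => by simp [Preadditive.add_comp] }

/-- An object `A` is compact if for every small family `(B i)` the canonical map
`⨁ᵢ Hom(A, B i) → Hom(A, ∐ B)` is bijective. -/
def IsCompactObj {C : Type u} [Category.{v} C] [Preadditive C] (A : C) : Prop :=
  ∀ ⦃ι : Type v⦄ (B : ι → C) [HasCoproduct B],
    Function.Bijective (homCoprodComparison A B)

section

variable {C D : Type u} [Category.{v} C] [Category.{v} D] [Preadditive C] [Preadditive D]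

lemma homCoprodComparison_single {ι : Type v} [DecidableEq ι] (A : C) (B : ι → C)
    [HasCoproduct B] (i : ι) (f : A ⟶ B i) :
    homCoprodComparison A B (DFinsupp.single i f) = f ≫ Sigma.ι B i :=
  DFinsupp.sumAddHom_single _ _ _

lemma CategoryTheory.Adjunction.homEquiv_homCoprodComparison {F : C ⥤ D} {G : D ⥤ C} (adj : F ⊣ G)
    [F.Additive] (A : C) {ι : Type v} (X : ι → D) [HasCoproduct X]
    [HasCoproduct fun i => G.obj (X i)] (w : Π₀ i, (F.obj A ⟶ X i)) :
    adj.homEquiv A (∐ X) (homCoprodComparison (F.obj A) X w) =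
      homCoprodComparison A (fun i => G.obj (X i))
        (DFinsupp.mapRange.addEquiv (fun i => adj.homAddEquiv A (X i)) w) ≫
          sigmaComparison G X := by
  classical
  suffices h : (adj.homAddEquiv A (∐ X)).toAddMonoidHom.comp (homCoprodComparison (F.obj A) X) =
      (Preadditive.rightComp A (sigmaComparison G X)).comp
        ((homCoprodComparison A fun i => G.obj (X i)).comp
          (DFinsupp.mapRange.addEquiv fun i => adj.homAddEquiv A (X i)).toAddMonoidHom) from
    DFunLike.congr_fun h w
  refine DFinsupp.addHom_ext fun i f => ?_
  simp [homCoprodComparison_single, DFinsupp.mapRange_single, adj.homEquiv_naturality_right,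
    Preadditive.rightComp]

lemma IsCompactObj.of_adjunction [HasCoproducts.{v} C] {F : C ⥤ D} {G : D ⥤ C} (adj : F ⊣ G)
    [F.Additive] (hG : ∀ ⦃ι : Type v⦄ (X : ι → D) [HasCoproduct X], IsIso (sigmaComparison G X))
    {A : C} (hA : IsCompactObj A) : IsCompactObj (F.obj A) := by
  intro ι X _
  have hσ : Function.Bijective fun f : A ⟶ ∐ fun i => G.obj (X i) => f ≫ sigmaComparison G X :=
    ⟨fun _ _ h => (cancel_mono _).1 h, fun g => ⟨g ≫ inv (sigmaComparison G X), by simp⟩⟩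
  have hfactor : ⇑(homCoprodComparison (F.obj A) X) = (adj.homEquiv A (∐ X)).symm ∘
      (fun f => f ≫ sigmaComparison G X) ∘ homCoprodComparison A (fun i => G.obj (X i)) ∘
        DFinsupp.mapRange.addEquiv (fun i => adj.homAddEquiv A (X i)) := by
    funext w
    exact (Equiv.eq_symm_apply _).2 (adj.homEquiv_homCoprodComparison A X w)
  rw [hfactor]
  exact (adj.homEquiv _ _).symm.bijective.comp
    (hσ.comp ((hA _).comp (DFinsupp.mapRange.addEquiv _).bijective))

lemma CategoryTheory.Adjunction.eq_zero_of_forall_hom_shift_eq_zero [HasShift C ℤ] [HasShift D ℤ]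
    {F : C ⥤ D} {G : D ⥤ C} (adj : F ⊣ G) [F.Additive]
    (e : ∀ n : ℤ, shiftFunctor D n ⋙ G ≅ G ⋙ shiftFunctor C n) {A : C} {X : D}
    (hX : ∀ (i : ℤ) (f : F.obj A ⟶ X⟦i⟧), f = 0) (i : ℤ) (f : A ⟶ (G.obj X)⟦i⟧) : f = 0 := by
  rw [← cancel_mono ((e i).inv.app X), zero_comp,
    ← (adj.homEquiv _ _).apply_symm_apply (f ≫ _), hX i ((adj.homEquiv _ _).symm _),
    adj.homAddEquiv_zero]

end

theorem stmt4 {S T : Type u} [Category.{v} S] [Category.{v} T]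
    [HasZeroObject S] [HasZeroObject T] [Preadditive S] [Preadditive T]
    [HasShift S ℤ] [HasShift T ℤ]
    [∀ n : ℤ, (shiftFunctor S n).Additive] [∀ n : ℤ, (shiftFunctor T n).Additive]
    [Pretriangulated S] [Pretriangulated T] [IsTriangulated S] [IsTriangulated T]
    [HasCoproducts.{v} S] [HasCoproducts.{v} T]
    (F : S ⥤ T) (G : T ⥤ S) (adj : F ⊣ G)
    -- `G` commutes with the shift functors
    (e : ∀ n : ℤ, shiftFunctor T n ⋙ G ≅ G ⋙ shiftFunctor S n)
    -- `G` commutes with small coproducts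
    (hG : ∀ ⦃ι : Type v⦄ (X : ι → T),
      IsIso (Sigma.desc (fun i => G.map (Sigma.ι X i)) :
        (∐ fun i => G.obj (X i)) ⟶ G.obj (∐ X)))
    -- `G` reflects zero objects
    (hGzero : ∀ X : T, IsZero (G.obj X) → IsZero X)
    -- `U` is a compact generator of `S`
    (U : S) (hUcpt : IsCompactObj U)
    (hUgen : ∀ X : S, (∀ i : ℤ, ∀ f : U ⟶ X⟦i⟧, f = 0) → IsZero X) :
    IsCompactObj (F.obj U) ∧
      ∀ X : T, (∀ i : ℤ, ∀ f : F.obj U ⟶ X⟦i⟧, f = 0) → IsZero X := by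
  have : HasBinaryBiproducts T := .of_hasBinaryCoproducts
  have := adj.rightAdjoint_preservesLimits
  have : G.Additive := G.additive_of_preserves_binary_products
  have : F.Additive := adj.left_adjoint_additive
  exact ⟨hUcpt.of_adjunction adj fun ι X _ => hG X,
    fun X hX => hGzero X (hUgen _ (adj.eq_zero_of_forall_hom_shift_eq_zero e hX))⟩
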